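/- For all processes p₀ and q₀ of a labeled transition system with silent steps: there is no formula of HML_srbb distinguishing p₀ from q₀ if and only if there exists a stability-respecting branching bisimulation R with (p₀, q₀) ∈ R. -/
import Mathlib


open Classical

noncomputable section

namespace Spectroscopy

/-! ### Energies and declining energy games -/

/-- Energies: 8-dimensional vectors over `ℕ ∪ {∞}`, ordered componentwise. -/
abbrev Energy : Type := Fin 8 → ℕ∞

/-- The `i`-th unit vector. -/
def unitE (i : Fin 8) : Energy := fun k => if k = i then 1 else 0

/-- The vector with value `v` at position `i` and `0` elsewhere. -/
def onlyAt (i : Fin 8) (v : ℕ∞) : Energy := fun k => if k = i then v else 0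

/-- Components of energy updates: `-1`, `0`, or minimum selection `min_D`.
For the component at position `k`, `minWith D` selects the minimum over the
positions `{k} ∪ D`, so the requirement `k ∈ D` of the paper holds by
construction. -/
inductive UpdComp : Type
  | decr : UpdComp
  | zero : UpdComp
  | minWith (D : Finset (Fin 8)) : UpdComp
deriving DecidableEq

/-- Energy updates. -/
abbrev Update : Type := Fin 8 → UpdComp

/-- Partial application of an update to an energy (`none` when a component
would become negative). -/
def upd (e : Energy) (u : Update) : Option Energy :=
  if ∀ k, u k = UpdComp.decr → e k ≠ 0 then
    some (fun k =>
      match u k with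
      | UpdComp.decr => e k - 1
      | UpdComp.zero => e k
      | UpdComp.minWith D => (insert k D).inf e)
  else none

/-- A declining energy game: positions, a defender predicate (attacker
positions are the non-defender ones), and moves labeled with updates. -/
structure EGame (Pos : Type) where
  defender : Pos → Prop
  move : Pos → Update → Pos → Prop

/-- Attacker winning budgets `Win_a`: at an attacker position some move must
lead to an attacker-won position under the updated energy; at a defender
position every move must (be defined and) lead to an attacker-won position. -/
inductive EGame.Win {Pos : Type} (G : EGame Pos) : Pos → Energy → Prop
  | attack {g : Pos} {u : Update} {g' : Pos} {e e' : Energy} :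
      ¬ G.defender g → G.move g u g' → upd e u = some e' → G.Win g' e' →
      G.Win g e
  | defend {g : Pos} {e : Energy} :
      G.defender g →
      (∀ u g', G.move g u g' → upd e u ≠ none) →
      (∀ u g' e', G.move g u g' → upd e u = some e' → G.Win g' e') →
      G.Win g e

/-! ### Labeled transition systems with silent steps -/

section LTS

variable {Proc Act : Type}

/-- Weak internal steps `↠`: reflexive-transitive closure of `τ`-steps. -/
def Star (Tr : Proc → Act → Proc → Prop) (τ : Act) : Proc → Proc → Prop :=
  Relation.ReflTransGen fun p p' => Tr p τ p'

/-- A process is stable if it has no `τ`-step. -/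
def Stable (Tr : Proc → Act → Proc → Prop) (τ : Act) (p : Proc) : Prop :=
  ∀ p', ¬ Tr p τ p'

/-- Optional step `p →(α) p'`: a real `α`-step, or `α = τ` and `p = p'`. -/
def OptStep (Tr : Proc → Act → Proc → Prop) (τ : Act) (p : Proc) (α : Act) (p' : Proc) : Prop :=
  Tr p α p' ∨ (α = τ ∧ p = p')

/-- Lift of `→a` to sets. -/
def SetStep (Tr : Proc → Act → Proc → Prop) (Q : Set Proc) (a : Act) (Q' : Set Proc) : Prop :=
  Q' = {q' | ∃ q ∈ Q, Tr q a q'}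

/-- Lift of `↠` to sets. -/
def SetStar (Tr : Proc → Act → Proc → Prop) (τ : Act) (Q Q' : Set Proc) : Prop :=
  Q' = {q' | ∃ q ∈ Q, Star Tr τ q q'}

/-- Lift of `→(α)` to sets. -/
def SetOpt (Tr : Proc → Act → Proc → Prop) (τ : Act) (Q : Set Proc) (α : Act)
    (Q' : Set Proc) : Prop :=
  Q' = {q' | ∃ q ∈ Q, OptStep Tr τ q α q'}

end LTS

/-! ### The logic HML_srbb -/

mutual
/-- Formulas `φ` of HML_srbb: `⟨ε⟩χ` or immediate conjunctions `⋀Ψ`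
(conjunctions are indexed by an arbitrary type). `⊤` is the empty conjunction. -/
inductive Formula (Act : Type) (τ : Act) : Type 1
  | delayed : DFormula Act τ → Formula Act τ
  | conj : (I : Type) → (I → Conjunct Act τ) → Formula Act τ

/-- Delayed formulas `χ`: observations `⟨a⟩φ` (with `a ≠ τ`), standard
conjunctions `⋀Ψ`, stable conjunctions `⋀({¬⟨τ⟩⊤} ∪ Ψ)`, and branching
conjunctions `⋀({(α)φ} ∪ Ψ)`. -/
inductive DFormula (Act : Type) (τ : Act) : Type 1
  | obs : (a : Act) → a ≠ τ → Formula Act τ → DFormula Act τ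
  | conj : (I : Type) → (I → Conjunct Act τ) → DFormula Act τ
  | stableConj : (I : Type) → (I → Conjunct Act τ) → DFormula Act τ
  | branchConj : (α : Act) → Formula Act τ → (I : Type) → (I → Conjunct Act τ) → DFormula Act τ

/-- Conjuncts `ψ`: positive `⟨ε⟩χ` or negative `¬⟨ε⟩χ`. -/
inductive Conjunct (Act : Type) (τ : Act) : Type 1
  | pos : DFormula Act τ → Conjunct Act τ
  | neg : DFormula Act τ → Conjunct Act τ
end

section Semantics

variable {Proc Act : Type}

mutual
/-- Semantics `⟦φ⟧`. -/
def Sat (Tr : Proc → Act → Proc → Prop) (τ : Act) (p : Proc) : Formula Act τ → Prop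
  | .delayed χ => ∃ p', Star Tr τ p p' ∧ SatD Tr τ p' χ
  | .conj _ ps => ∀ i, SatC Tr τ p (ps i)

/-- Semantics `⟦χ⟧^ε` of delayed formulas. -/
def SatD (Tr : Proc → Act → Proc → Prop) (τ : Act) (p : Proc) : DFormula Act τ → Prop
  | .obs a _ φ => ∃ p', Tr p a p' ∧ Sat Tr τ p' φ
  | .conj _ ps => ∀ i, SatC Tr τ p (ps i)
  | .stableConj _ ps => Stable Tr τ p ∧ ∀ i, SatC Tr τ p (ps i)
  | .branchConj α φ _ ps =>
      (∃ p', OptStep Tr τ p α p' ∧ Sat Tr τ p' φ) ∧ ∀ i, SatC Tr τ p (ps i)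

/-- Semantics `⟦ψ⟧^∧` of conjuncts. -/
def SatC (Tr : Proc → Act → Proc → Prop) (τ : Act) (p : Proc) : Conjunct Act τ → Prop
  | .pos χ => ∃ p', Star Tr τ p p' ∧ SatD Tr τ p' χ
  | .neg χ => ¬ ∃ p', Star Tr τ p p' ∧ SatD Tr τ p' χ
end

/-- `φ` distinguishes `p` from the set `Q`. -/
def Distinguishes (Tr : Proc → Act → Proc → Prop) (τ : Act) (φ : Formula Act τ)
    (p : Proc) (Q : Set Proc) : Prop :=
  Sat Tr τ p φ ∧ ∀ q ∈ Q, ¬ Sat Tr τ q φ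

/-- The delayed formula `χ` distinguishes `p` from the set `Q` w.r.t. `⟦·⟧^ε`. -/
def DistinguishesD (Tr : Proc → Act → Proc → Prop) (τ : Act) (χ : DFormula Act τ)
    (p : Proc) (Q : Set Proc) : Prop :=
  SatD Tr τ p χ ∧ ∀ q ∈ Q, ¬ SatD Tr τ q χ

/-- The conjunct `ψ` distinguishes `p` from `q` w.r.t. `⟦·⟧^∧`. -/
def DistinguishesC (Tr : Proc → Act → Proc → Prop) (τ : Act) (ψ : Conjunct Act τ)
    (p q : Proc) : Prop :=
  SatC Tr τ p ψ ∧ ¬ SatC Tr τ q ψ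

/-- Stability-respecting branching bisimulations: symmetric relations with the
branching-bisimulation transfer property and the stability-respecting
property. -/
def IsSRBBisim (Tr : Proc → Act → Proc → Prop) (τ : Act) (R : Proc → Proc → Prop) : Prop :=
  Symmetric R ∧
  (∀ p q, R p q → ∀ α p', Tr p α p' →
    (α = τ ∧ R p' q) ∨
      ∃ q' q'', Star Tr τ q q' ∧ Tr q' α q'' ∧ R p q' ∧ R p' q'') ∧
  (∀ p q, R p q → Stable Tr τ p →
    ∃ q', Star Tr τ q q' ∧ Stable Tr τ q' ∧ R p q')

end Semantics

/-! ### Expressiveness prices -/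

section Expr

variable {Act : Type} {τ : Act}

mutual
/-- Expressiveness price `expr` of formulas. -/
def exprF : Formula Act τ → Energy
  | .delayed χ => exprE χ
  | .conj I ps => ⨆ _ : Nonempty I, ((unitE 4 + unitE 2) + ⨆ i, exprC (ps i))

/-- Expressiveness price `expr^ε` of delayed formulas. -/
def exprE : DFormula Act τ → Energy
  | .obs _ _ φ => unitE 0 + exprF φ
  | .conj I ps => ⨆ _ : Nonempty I, (unitE 2 + ⨆ i, exprC (ps i))
  | .stableConj _ ps => unitE 3 + ⨆ i, exprC (ps i)
  | .branchConj _ φ _ ps =>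
      (unitE 1 + unitE 2) +
        (((unitE 0 + exprF φ) ⊔ onlyAt 5 (1 + exprF φ 0)) ⊔ ⨆ i, exprC (ps i))

/-- Expressiveness price `expr^∧` of conjuncts. -/
def exprC : Conjunct Act τ → Energy
  | .pos χ => exprE χ ⊔ onlyAt 5 (exprE χ 0)
  | .neg χ => (unitE 7 + exprE χ) ⊔ onlyAt 6 (exprE χ 0)
end

end Expr

/-! ### The weak spectroscopy energy game -/

/-- Positions of the weak spectroscopy game. -/
inductive GPos (Proc Act : Type) : Type
  | att (p : Proc) (Q : Set Proc)                                 -- `[p,Q]_a`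
  | attD (p : Proc) (Q : Set Proc)                                -- `[p,Q]^ε_a`
  | attC (p q : Proc)                                             -- `[p,q]^∧_a`
  | attB (p : Proc) (Q : Set Proc)                                -- `[p,Q]^η_a`
  | defC (p : Proc) (Q : Set Proc)                                -- `(p,Q)_d`
  | defS (p : Proc) (Q : Set Proc)                                -- `(p,Q)^s_d`
  | defB (p : Proc) (α : Act) (p' : Proc) (Q Qa : Set Proc)       -- `(p,α,p',Q,Qa)^η_d`

/-- The zero update. -/
def zeroU : Update := fun _ => UpdComp.zero

/-- The update `-ê_i`. -/
def decU (i : Fin 8) : Update := fun k => if k = i then UpdComp.decr else UpdComp.zero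

/-- The update `(min_{1,6},0,0,0,0,0,0,0)`. -/
def minU16 : Update := fun k => if k = 0 then UpdComp.minWith {5} else UpdComp.zero

/-- The update `(min_{1,7},0,0,0,0,0,0,-1)`. -/
def minU17dec8 : Update := fun k =>
  if k = 0 then UpdComp.minWith {6} else if k = 7 then UpdComp.decr else UpdComp.zero

/-- The update `(0,-1,-1,0,0,0,0,0)`. -/
def dec23 : Update := fun k => if k = 1 ∨ k = 2 then UpdComp.decr else UpdComp.zero

/-- The update `(min_{1,6},-1,-1,0,0,0,0,0)`. -/
def minU16dec23 : Update := fun k =>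
  if k = 0 then UpdComp.minWith {5}
  else if k = 1 ∨ k = 2 then UpdComp.decr else UpdComp.zero

section Game

variable {Proc Act : Type}

/-- Moves of the weak spectroscopy game. -/
inductive GMove (Tr : Proc → Act → Proc → Prop) (τ : Act) :
    GPos Proc Act → Update → GPos Proc Act → Prop
  | delay {p : Proc} {Q Q' : Set Proc} :
      SetStar Tr τ Q Q' →
      GMove Tr τ (.att p Q) zeroU (.attD p Q')
  | procrastination {p p' : Proc} {Q : Set Proc} :
      Tr p τ p' → p ≠ p' →
      GMove Tr τ (.attD p Q) zeroU (.attD p' Q)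
  | observation {p p' : Proc} {a : Act} {Q Q' : Set Proc} :
      Tr p a p' → a ≠ τ → SetStep Tr Q a Q' →
      GMove Tr τ (.attD p Q) (decU 0) (.att p' Q')
  | finishing {p : Proc} :
      GMove Tr τ (.att p ∅) zeroU (.defC p ∅)
  | immediateConj {p : Proc} {Q : Set Proc} :
      Q ≠ ∅ →
      GMove Tr τ (.att p Q) (decU 4) (.defC p Q)
  | lateConj {p : Proc} {Q : Set Proc} :
      GMove Tr τ (.attD p Q) zeroU (.defC p Q)
  | conjAnswer {p q : Proc} {Q : Set Proc} :
      q ∈ Q →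
      GMove Tr τ (.defC p Q) (decU 2) (.attC p q)
  | posConjunct {p q : Proc} {Q : Set Proc} :
      SetStar Tr τ {q} Q →
      GMove Tr τ (.attC p q) minU16 (.attD p Q)
  | negConjunct {p q : Proc} {Q : Set Proc} :
      SetStar Tr τ {p} Q → p ≠ q →
      GMove Tr τ (.attC p q) minU17dec8 (.attD q Q)
  | stableConj {p : Proc} {Q : Set Proc} :
      Stable Tr τ p →
      GMove Tr τ (.attD p Q) zeroU (.defS p {q ∈ Q | Stable Tr τ q})
  | conjStableAnswer {p q : Proc} {Q : Set Proc} :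
      q ∈ Q →
      GMove Tr τ (.defS p Q) (decU 3) (.attC p q)
  | stableFinishing {p : Proc} :
      GMove Tr τ (.defS p ∅) (decU 3) (.defC p ∅)
  | branchConj {p p' : Proc} {α : Act} {Q Qa : Set Proc} :
      OptStep Tr τ p α p' → Qa ⊆ Q →
      GMove Tr τ (.attD p Q) zeroU (.defB p α p' (Q \ Qa) Qa)
  | branchAnswer {p p' q : Proc} {α : Act} {Q Qa : Set Proc} :
      q ∈ Q →
      GMove Tr τ (.defB p α p' Q Qa) dec23 (.attC p q)
  | branchObservation {p p' : Proc} {α : Act} {Q Qa Q' : Set Proc} :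
      SetOpt Tr τ Qa α Q' →
      GMove Tr τ (.defB p α p' Q Qa) minU16dec23 (.attB p' Q')
  | branchAccounting {p : Proc} {Q : Set Proc} :
      GMove Tr τ (.attB p Q) (decU 0) (.att p Q)

/-- Defender positions of the weak spectroscopy game. -/
def isDefender : GPos Proc Act → Prop
  | .defC _ _ => True
  | .defS _ _ => True
  | .defB _ _ _ _ _ => True
  | _ => False

/-- The weak spectroscopy energy game `G△`. -/
def specGame (Tr : Proc → Act → Proc → Prop) (τ : Act) : EGame (GPos Proc Act) where
  defender := isDefender
  move := GMove Tr τ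

end Game

/-! ### Strategy formulas -/

section Strat

variable {Proc Act : Type}

mutual
/-- Attacker strategy formulas (formula sort). -/
inductive StratF (Tr : Proc → Act → Proc → Prop) (τ : Act) :
    GPos Proc Act → Energy → Formula Act τ → Prop
  | delay {p : Proc} {Q Q' : Set Proc} {u : Update} {e e' : Energy} {χ : DFormula Act τ} :
      GMove Tr τ (.att p Q) u (.attD p Q') →
      upd e u = some e' →
      (specGame Tr τ).Win (.attD p Q') e' →
      StratD Tr τ (.attD p Q') e' χ →
      StratF Tr τ (.att p Q) e (.delayed χ)
  | immediateConj {p : Proc} {Q : Set Proc} {u : Update} {e e' : Energy}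
      {I : Type} {ps : I → Conjunct Act τ} :
      GMove Tr τ (.att p Q) u (.defC p Q) →
      upd e u = some e' →
      (specGame Tr τ).Win (.defC p Q) e' →
      StratD Tr τ (.defC p Q) e' (.conj I ps) →
      StratF Tr τ (.att p Q) e (.conj I ps)

/-- Attacker strategy formulas (delayed-formula sort). -/
inductive StratD (Tr : Proc → Act → Proc → Prop) (τ : Act) :
    GPos Proc Act → Energy → DFormula Act τ → Prop
  | procrastination {p p' : Proc} {Q : Set Proc} {u : Update} {e e' : Energy}
      {χ : DFormula Act τ} :
      GMove Tr τ (.attD p Q) u (.attD p' Q) →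
      upd e u = some e' →
      (specGame Tr τ).Win (.attD p' Q) e' →
      StratD Tr τ (.attD p' Q) e' χ →
      StratD Tr τ (.attD p Q) e χ
  | observation {p p' : Proc} {a : Act} {Q Q' : Set Proc} {u : Update} {e e' : Energy}
      {φ : Formula Act τ} (ha : a ≠ τ) :
      GMove Tr τ (.attD p Q) u (.att p' Q') →
      Tr p a p' → SetStep Tr Q a Q' →
      upd e u = some e' →
      (specGame Tr τ).Win (.att p' Q') e' →
      StratF Tr τ (.att p' Q') e' φ →
      StratD Tr τ (.attD p Q) e (.obs a ha φ)
  | lateConj {p : Proc} {Q : Set Proc} {u : Update} {e e' : Energy} {χ : DFormula Act τ} :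
      GMove Tr τ (.attD p Q) u (.defC p Q) →
      upd e u = some e' →
      (specGame Tr τ).Win (.defC p Q) e' →
      StratD Tr τ (.defC p Q) e' χ →
      StratD Tr τ (.attD p Q) e χ
  | stable {p : Proc} {Q Q' : Set Proc} {u : Update} {e e' : Energy} {χ : DFormula Act τ} :
      GMove Tr τ (.attD p Q) u (.defS p Q') →
      upd e u = some e' →
      (specGame Tr τ).Win (.defS p Q') e' →
      StratD Tr τ (.defS p Q') e' χ →
      StratD Tr τ (.attD p Q) e χ
  | branch {p p' : Proc} {α : Act} {Q Q' Qa : Set Proc} {u : Update} {e e' : Energy}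
      {χ : DFormula Act τ} :
      GMove Tr τ (.attD p Q) u (.defB p α p' Q' Qa) →
      upd e u = some e' →
      (specGame Tr τ).Win (.defB p α p' Q' Qa) e' →
      StratD Tr τ (.defB p α p' Q' Qa) e' χ →
      StratD Tr τ (.attD p Q) e χ
  | conj {p : Proc} {Q : Set Proc} {e : Energy}
      (us : {q // q ∈ Q} → Update) (es : {q // q ∈ Q} → Energy)
      (ψs : {q // q ∈ Q} → Conjunct Act τ) :
      (∀ qq : {q // q ∈ Q}, GMove Tr τ (.defC p Q) (us qq) (.attC p qq.1)) →
      (∀ qq : {q // q ∈ Q}, upd e (us qq) = some (es qq)) →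
      (∀ qq : {q // q ∈ Q}, (specGame Tr τ).Win (.attC p qq.1) (es qq)) →
      (∀ qq : {q // q ∈ Q}, StratC Tr τ (.attC p qq.1) (es qq) (ψs qq)) →
      StratD Tr τ (.defC p Q) e (.conj {q // q ∈ Q} ψs)
  | stableConj {p : Proc} {Q : Set Proc} {e : Energy}
      (hne : Q.Nonempty)
      (us : {q // q ∈ Q} → Update) (es : {q // q ∈ Q} → Energy)
      (ψs : {q // q ∈ Q} → Conjunct Act τ) :
      (∀ qq : {q // q ∈ Q}, GMove Tr τ (.defS p Q) (us qq) (.attC p qq.1)) →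
      (∀ qq : {q // q ∈ Q}, upd e (us qq) = some (es qq)) →
      (∀ qq : {q // q ∈ Q}, (specGame Tr τ).Win (.attC p qq.1) (es qq)) →
      (∀ qq : {q // q ∈ Q}, StratC Tr τ (.attC p qq.1) (es qq) (ψs qq)) →
      StratD Tr τ (.defS p Q) e (.stableConj {q // q ∈ Q} ψs)
  | stableFinish {p : Proc} {u : Update} {e e' : Energy} :
      GMove Tr τ (.defS p ∅) u (.defC p ∅) →
      upd e u = some e' →
      (specGame Tr τ).Win (.defC p (∅ : Set Proc)) e' →
      StratD Tr τ (.defS p ∅) e (.stableConj Empty fun x => x.elim)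
  | branchConj {p p' : Proc} {α : Act} {Q Qa Q' : Set Proc} {ua ua' : Update}
      {e e1 ea : Energy} {φa : Formula Act τ}
      (us : {q // q ∈ Q} → Update) (es : {q // q ∈ Q} → Energy)
      (ψs : {q // q ∈ Q} → Conjunct Act τ) :
      GMove Tr τ (.defB p α p' Q Qa) ua (.attB p' Q') →
      GMove Tr τ (.attB p' Q') ua' (.att p' Q') →
      upd e ua = some e1 →
      upd e1 ua' = some ea →
      (specGame Tr τ).Win (.att p' Q') ea →
      StratF Tr τ (.att p' Q') ea φa →
      (∀ qq : {q // q ∈ Q}, GMove Tr τ (.defB p α p' Q Qa) (us qq) (.attC p qq.1)) →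
      (∀ qq : {q // q ∈ Q}, upd e (us qq) = some (es qq)) →
      (∀ qq : {q // q ∈ Q}, (specGame Tr τ).Win (.attC p qq.1) (es qq)) →
      (∀ qq : {q // q ∈ Q}, StratC Tr τ (.attC p qq.1) (es qq) (ψs qq)) →
      StratD Tr τ (.defB p α p' Q Qa) e (.branchConj α φa {q // q ∈ Q} ψs)

/-- Attacker strategy formulas (conjunct sort). -/
inductive StratC (Tr : Proc → Act → Proc → Prop) (τ : Act) :
    GPos Proc Act → Energy → Conjunct Act τ → Prop
  | pos {p q : Proc} {Q' : Set Proc} {u : Update} {e e' : Energy} {χ : DFormula Act τ} :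
      GMove Tr τ (.attC p q) u (.attD p Q') →
      upd e u = some e' →
      (specGame Tr τ).Win (.attD p Q') e' →
      StratD Tr τ (.attD p Q') e' χ →
      StratC Tr τ (.attC p q) e (.pos χ)
  | neg {p q : Proc} {P' : Set Proc} {u : Update} {e e' : Energy} {χ : DFormula Act τ} :
      GMove Tr τ (.attC p q) u (.attD q P') →
      upd e u = some e' →
      (specGame Tr τ).Win (.attD q P') e' →
      StratD Tr τ (.attD q P') e' χ →
      StratC Tr τ (.attC p q) e (.neg χ)
end

end Strat


/-! ### Auxiliary lemmas for the modal characterization -/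

section Char

variable {Proc Act : Type} {Tr : Proc → Act → Proc → Prop} {τ : Act}

/-- A branching bisimulation transfers along `↠`. -/
theorem srbb_star {R : Proc → Proc → Prop} (h : IsSRBBisim Tr τ R) {p p' q : Proc}
    (hR : R p q) (hs : Star Tr τ p p') : ∃ q', Star Tr τ q q' ∧ R p' q' := by
  induction hs with
  | refl => exact ⟨q, Relation.ReflTransGen.refl, hR⟩
  | tail hab hbc ih =>
    obtain ⟨q', hsq, hR'⟩ := ih
    rcases h.2.1 _ _ hR' _ _ hbc with ⟨_, hR''⟩ | ⟨q1, q2, hs1, ht1, _, hR2⟩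
    · exact ⟨q', hsq, hR''⟩
    · exact ⟨q2, hsq.trans (hs1.tail ht1), hR2⟩

mutual
/-- Preservation of formulas along a stability-respecting branching bisimulation. -/
theorem presF {R : Proc → Proc → Prop} (h : IsSRBBisim Tr τ R) :
    ∀ φ : Formula Act τ, ∀ p q, R p q → Sat Tr τ p φ → Sat Tr τ q φ
  | .delayed χ, p, q, hR, hp => by
    simp only [Sat] at hp ⊢
    obtain ⟨p', hs, hD⟩ := hp
    obtain ⟨q1, hsq, hR1⟩ := srbb_star h hR hs
    obtain ⟨q', hsq', _, hD'⟩ := presD h χ p' q1 hR1 hD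
    exact ⟨q', hsq.trans hsq', hD'⟩
  | .conj I ps, p, q, hR, hp => by
    simp only [Sat] at hp ⊢
    exact fun i => presC h (ps i) p q hR (hp i)

/-- Preservation of delayed formulas, up to internal steps. -/
theorem presD {R : Proc → Proc → Prop} (h : IsSRBBisim Tr τ R) :
    ∀ χ : DFormula Act τ, ∀ p q, R p q → SatD Tr τ p χ →
      ∃ q', Star Tr τ q q' ∧ R p q' ∧ SatD Tr τ q' χ
  | .obs a ha φ, p, q, hR, hp => by
    simp only [SatD] at hp ⊢
    obtain ⟨p', ht, hφ⟩ := hp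
    rcases h.2.1 _ _ hR _ _ ht with ⟨rfl, _⟩ | ⟨q', q'', hsq, ht', hRq', hRq''⟩
    · exact absurd rfl ha
    · exact ⟨q', hsq, hRq', q'', ht', presF h φ p' q'' hRq'' hφ⟩
  | .conj I ps, p, q, hR, hp => by
    simp only [SatD] at hp ⊢
    exact ⟨q, Relation.ReflTransGen.refl, hR, fun i => presC h (ps i) p q hR (hp i)⟩
  | .stableConj I ps, p, q, hR, hp => by
    simp only [SatD] at hp ⊢
    obtain ⟨q', hsq, hst, hRq'⟩ := h.2.2 _ _ hR hp.1
    exact ⟨q', hsq, hRq', hst, fun i => presC h (ps i) p q' hRq' (hp.2 i)⟩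
  | .branchConj α φ I ps, p, q, hR, hp => by
    have IHφ := fun p q hR hp => presF h φ p q hR hp
    have IHps := fun i p q hR hp => presC h (ps i) p q hR hp
    simp only [SatD] at hp ⊢
    obtain ⟨⟨p', hopt, hφ⟩, hconj⟩ := hp
    rcases hopt with ht | ⟨rfl, rfl⟩
    · rcases h.2.1 _ _ hR _ _ ht with ⟨rfl, hR'⟩ | ⟨q', q'', hsq, ht', hRq', hRq''⟩
      · exact ⟨q, Relation.ReflTransGen.refl, hR,
          ⟨q, Or.inr ⟨rfl, rfl⟩, IHφ p' q hR' hφ⟩,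
          fun i => IHps i p q hR (hconj i)⟩
      · exact ⟨q', hsq, hRq', ⟨q'', Or.inl ht', IHφ p' q'' hRq'' hφ⟩,
          fun i => IHps i p q' hRq' (hconj i)⟩
    · exact ⟨q, Relation.ReflTransGen.refl, hR,
        ⟨q, Or.inr ⟨rfl, rfl⟩, IHφ p q hR hφ⟩,
        fun i => IHps i p q hR (hconj i)⟩

/-- Preservation of conjuncts. -/
theorem presC {R : Proc → Proc → Prop} (h : IsSRBBisim Tr τ R) :
    ∀ ψ : Conjunct Act τ, ∀ p q, R p q → SatC Tr τ p ψ → SatC Tr τ q ψ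
  | .pos χ, p, q, hR, hp => by
    simp only [SatC] at hp ⊢
    obtain ⟨p', hs, hD⟩ := hp
    obtain ⟨q1, hsq, hR1⟩ := srbb_star h hR hs
    obtain ⟨q', hsq', _, hD'⟩ := presD h χ p' q1 hR1 hD
    exact ⟨q', hsq.trans hsq', hD'⟩
  | .neg χ, p, q, hR, hp => by
    simp only [SatC] at hp ⊢
    rintro ⟨q', hsq, hD⟩
    obtain ⟨p1, hsp, hR1⟩ := srbb_star h (h.1 hR) hsq
    obtain ⟨p', hsp', _, hD'⟩ := presD h χ q' p1 hR1 hD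
    exact hp ⟨p', hsp.trans hsp', hD'⟩
end

/-- Logical preorder: every formula satisfied by `p` is satisfied by `q`. -/
def Rlog (Tr : Proc → Act → Proc → Prop) (τ : Act) (p q : Proc) : Prop :=
  ∀ φ : Formula Act τ, Sat Tr τ p φ → Sat Tr τ q φ

theorem not_Rlog {p q : Proc} (h : ¬ Rlog Tr τ p q) :
    ∃ φ : Formula Act τ, Sat Tr τ p φ ∧ ¬ Sat Tr τ q φ := by
  simpa [Rlog, not_forall] using h

/-- Extract a distinguishing conjunct from a distinguishing formula. -/
theorem extractC {p q : Proc} (φ : Formula Act τ) (hp : Sat Tr τ p φ)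
    (hq : ¬ Sat Tr τ q φ) :
    ∃ ψ : Conjunct Act τ, SatC Tr τ p ψ ∧ ¬ SatC Tr τ q ψ := by
  cases φ with
  | delayed χ =>
    simp only [Sat] at hp hq
    refine ⟨.pos χ, ?_, ?_⟩
    · simp only [SatC]; exact hp
    · simp only [SatC]; exact hq
  | conj I ps =>
    simp only [Sat, not_forall] at hp hq
    obtain ⟨i, hi⟩ := hq
    exact ⟨ps i, hp i, hi⟩

theorem extractC' {p q : Proc} (h : ¬ Rlog Tr τ p q) :
    ∃ ψ : Conjunct Act τ, SatC Tr τ p ψ ∧ ¬ SatC Tr τ q ψ := by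
  obtain ⟨φ, hp, hq⟩ := not_Rlog h
  exact extractC φ hp hq

theorem Rlog_refl (p : Proc) : Rlog Tr τ p p := fun _ hp => hp

theorem Rlog_trans {p q r : Proc} (h1 : Rlog Tr τ p q) (h2 : Rlog Tr τ q r) :
    Rlog Tr τ p r := fun φ hp => h2 φ (h1 φ hp)

theorem Rlog_symm : Symmetric (Rlog Tr τ) := by
  intro p q hpq φ hq
  by_contra hp
  obtain ⟨ψ, hqψ, hpψ⟩ := extractC φ hq hp
  cases ψ with
  | pos χ =>
    have hsat : Sat Tr τ p (Formula.conj PUnit (fun _ => Conjunct.neg χ)) := by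
      simp only [Sat]
      intro _
      simp only [SatC] at hpψ ⊢
      exact hpψ
    have := hpq _ hsat
    simp only [Sat] at this
    have h2 := this PUnit.unit
    simp only [SatC] at h2 hqψ
    exact h2 hqψ
  | neg χ =>
    have hsat : Sat Tr τ p (Formula.delayed χ) := by
      simp only [SatC, not_not] at hpψ
      simpa [Sat] using hpψ
    have := hpq _ hsat
    simp only [Sat] at this
    simp only [SatC] at hqψ
    exact hqψ this

/-- The logical preorder is a stability-respecting branching bisimulation. -/
theorem Rlog_srbb : IsSRBBisim Tr τ (Rlog Tr τ) := by
  refine ⟨Rlog_symm, ?_, ?_⟩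
  · -- transfer property
    intro p q hpq α p' hstep
    by_contra hcon
    push_neg at hcon
    obtain ⟨h1, h2⟩ := hcon
    -- key: processes reachable from q that relate to p cannot α-match p'
    have key : ∀ qh, Star Tr τ q qh → Rlog Tr τ p qh →
        ∀ r', OptStep Tr τ qh α r' → ¬ Rlog Tr τ p' r' := by
      rintro qh hs hR r' (ht | ⟨rfl, rfl⟩) hR'
      · exact h2 qh r' hs ht hR hR'
      · exact h1 rfl (Rlog_trans hR' (Rlog_trans (Rlog_symm hR) hpq))
    set T : Set Proc :=
      {r' | ∃ qh, Star Tr τ q qh ∧ Rlog Tr τ p qh ∧ OptStep Tr τ qh α r'} with hT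
    have hTd : ∀ j : {r' // r' ∈ T}, ∃ ψ : Conjunct Act τ,
        SatC Tr τ p' ψ ∧ ¬ SatC Tr τ j.1 ψ := by
      rintro ⟨r', qh, hs, hR, hopt⟩
      exact extractC' (key qh hs hR r' hopt)
    choose ζ hζ1 hζ2 using hTd
    set Φ : Formula Act τ := Formula.conj {r' // r' ∈ T} ζ with hΦ
    set B : Set Proc := {qh | Star Tr τ q qh ∧ ¬ Rlog Tr τ p qh} with hB
    have hBd : ∀ b : {qh // qh ∈ B}, ∃ ψ : Conjunct Act τ,
        SatC Tr τ p ψ ∧ ¬ SatC Tr τ b.1 ψ := fun b => extractC' b.2.2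
    choose ψs hψ1 hψ2 using hBd
    set χ : DFormula Act τ := DFormula.branchConj α Φ {qh // qh ∈ B} ψs with hχ
    have hsatp : Sat Tr τ p (Formula.delayed χ) := by
      simp only [Sat]
      refine ⟨p, Relation.ReflTransGen.refl, ?_⟩
      simp only [hχ, SatD]
      refine ⟨⟨p', Or.inl hstep, ?_⟩, fun b => hψ1 b⟩
      simp only [hΦ, Sat]
      exact fun j => hζ1 j
    have hsatq : ¬ Sat Tr τ q (Formula.delayed χ) := by
      simp only [Sat]
      rintro ⟨qh, hs, hD⟩
      simp only [hχ, SatD] at hD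
      by_cases hRq : Rlog Tr τ p qh
      · obtain ⟨r', hopt, hsat⟩ := hD.1
        have hmem : r' ∈ T := ⟨qh, hs, hRq, hopt⟩
        simp only [hΦ, Sat] at hsat
        exact hζ2 ⟨r', hmem⟩ (hsat ⟨r', hmem⟩)
      · exact hψ2 ⟨qh, hs, hRq⟩ (hD.2 ⟨qh, hs, hRq⟩)
    exact hsatq (hpq _ hsatp)
  · -- stability respecting
    intro p q hpq hst
    by_contra hcon
    push_neg at hcon
    set S : Set Proc := {qh | Star Tr τ q qh ∧ Stable Tr τ qh} with hS
    have hSd : ∀ b : {qh // qh ∈ S}, ∃ ψ : Conjunct Act τ,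
        SatC Tr τ p ψ ∧ ¬ SatC Tr τ b.1 ψ :=
      fun b => extractC' (hcon b.1 b.2.1 b.2.2)
    choose ψs hψ1 hψ2 using hSd
    set χ : DFormula Act τ := DFormula.stableConj {qh // qh ∈ S} ψs with hχ
    have hsatp : Sat Tr τ p (Formula.delayed χ) := by
      simp only [Sat]
      exact ⟨p, Relation.ReflTransGen.refl, by
        simp only [hχ, SatD]
        exact ⟨hst, fun b => hψ1 b⟩⟩
    have hsatq : ¬ Sat Tr τ q (Formula.delayed χ) := by
      simp only [Sat]
      rintro ⟨qh, hs, hD⟩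
      simp only [hχ, SatD] at hD
      exact hψ2 ⟨qh, hs, hD.1⟩ (hD.2 ⟨qh, hs, hD.1⟩)
    exact hsatq (hpq _ hsatp)

end Char


/-- no HML_srbb formula distinguishes `p₀` from `q₀` iff there is a
stability-respecting branching bisimulation `R` with `(p₀, q₀) ∈ R`. -/
theorem hml_srbb_characterizes_srbb {Proc Act : Type} (Tr : Proc → Act → Proc → Prop)
    (τ : Act) (p₀ q₀ : Proc) :
    (¬ ∃ φ : Formula Act τ, Sat Tr τ p₀ φ ∧ ¬ Sat Tr τ q₀ φ) ↔
      ∃ R : Proc → Proc → Prop, IsSRBBisim Tr τ R ∧ R p₀ q₀ := by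
  constructor
  · intro h
    refine ⟨Rlog Tr τ, Rlog_srbb, ?_⟩
    intro φ hp
    by_contra hq
    exact h ⟨φ, hp, hq⟩
  · rintro ⟨R, hR, hpq⟩ ⟨φ, hp, hq⟩
    exact hq (presF hR φ p₀ q₀ hpq hp)

end Spectroscopy
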